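/- For every integer k ≥ 2, a vector c = (k, c_2, c_3, k, 1) ∈ ℤ⁵ is cohomology-free if and only if (c_2, c_3) is one of the four pairs (2k−1, 3k−2), (2k−1, 3k−1), (2k, 3k−1), (2k, 3k). -/

import Mathlib

/-- The primitive ray generators `l₁,…,l₇` of the fan, in counterclockwise order,
acting on `ℤ²` by the dot product. -/
def rayForm : Fin 7 → ℤ × ℤ :=
  ![(1, -1), (2, -1), (3, -1), (1, 0), (0, 1), (-1, 2), (0, -1)]

/-- Extend `c ∈ ℤ⁵` to seven coefficients by `c₆ = c₇ = 0`. -/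
def cExt (c : Fin 5 → ℤ) : Fin 7 → ℤ :=
  fun i => if h : (i : ℕ) < 5 then c ⟨i, h⟩ else 0

/-- `N_c(m) = {i : l_i(m) + c_i < 0}`. -/
def Nset (c : Fin 5 → ℤ) (m : ℤ × ℤ) : Finset (Fin 7) :=
  Finset.univ.filter fun i =>
    (rayForm i).1 * m.1 + (rayForm i).2 * m.2 + cExt c i < 0

/-- A subset of the cyclic index set `Fin 7` is a circular interval if it is empty
or of the form `{a, a+1, …, b}` with indices taken modulo 7. -/
def IsCircularInterval (S : Finset (Fin 7)) : Prop :=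
  S = ∅ ∨ ∃ (a : Fin 7) (n : ℕ),
    S = (Finset.range (n + 1)).image fun j : ℕ => a + (Fin.ofNat 7 j : Fin 7)

/-- `c ∈ ℤ⁵` is cohomology-free if for every `m ∈ ℤ²` and both `ε ∈ {1, -1}`,
the set `N_{εc}(m)` is a circular interval different from the whole index set. -/
def CohomologyFree (c : Fin 5 → ℤ) : Prop :=
  ∀ m : ℤ × ℤ, ∀ ε : ℤ, ε = 1 ∨ ε = -1 →
    IsCircularInterval (Nset (ε • c) m) ∧ Nset (ε • c) m ≠ Finset.univ

/-! A subset of `ℤ/7` is a circular interval iff it has at most one right end, an element `i`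
with `i + 1` outside it (a finite check over all 128 subsets). Membership in `N_c(m)` is a system
of linear inequalities in `m`, so both directions are linear arithmetic. If `c₂ ∉ [2k-1, 2k]` or
`c₃ - c₂ ∉ [k-1, k]`, an explicit `m` gives `N_{±c}(m)` two right ends. Under these bounds no two
distinct indices can both be right ends, and `N_{±c}(m)` never contains both indices `5` and `7`, since
`l₅(m) ± 1 < 0 < l₅(m)` is impossible. The bounds cut out exactly the four listed pairs. -/

def IsRightEnd (S : Finset (Fin 7)) (i : Fin 7) : Prop := i ∈ S ∧ i + 1 ∉ S

instance (S : Finset (Fin 7)) : DecidablePred (IsRightEnd S) := fun _ => by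
  unfold IsRightEnd; infer_instance

lemma image_range_eq_univ {n : ℕ} [NeZero n] (a : Fin n) {N : ℕ} (hN : n ≤ N + 1) :
    (Finset.range (N + 1)).image (fun j : ℕ => a + (Fin.ofNat n j : Fin n)) = Finset.univ := by
  refine Finset.eq_univ_of_forall fun x => Finset.mem_image.2 ⟨(x - a).val, ?_, ?_⟩
  · have := (x - a).isLt
    rw [Finset.mem_range]; omega
  · rw [Fin.ofNat_val_eq_self]; abel

lemma isCircularInterval_iff_exists_fin (S : Finset (Fin 7)) :
    IsCircularInterval S ↔ S = ∅ ∨ ∃ a n : Fin 7,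
      S = (Finset.range (n.val + 1)).image fun j : ℕ => a + (Fin.ofNat 7 j : Fin 7) := by
  refine or_congr_right ⟨fun ⟨a, n, h⟩ => ?_, fun ⟨a, n, h⟩ => ⟨a, n, h⟩⟩
  by_cases hn : n ≤ 6
  · exact ⟨a, ⟨n, by omega⟩, h⟩
  · refine ⟨a, 6, ?_⟩
    rw [h, image_range_eq_univ a (by omega)]
    exact (image_range_eq_univ a le_rfl).symm

set_option maxRecDepth 2000 in
lemma isCircularInterval_iff_rightEnd_unique (S : Finset (Fin 7)) :
    IsCircularInterval S ↔ ∀ i j, IsRightEnd S i → IsRightEnd S j → i = j := by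
  rw [isCircularInterval_iff_exists_fin]
  revert S
  decide

lemma mem_Nset_cons (a b c d e x y : ℤ) (i : Fin 7) :
    i ∈ Nset ![a, b, c, d, e] (x, y) ↔
      ![x - y + a, 2 * x - y + b, 3 * x - y + c, x + d, y + e, -x + 2 * y, -y] i < 0 := by
  simp only [Nset, Finset.mem_filter, Finset.mem_univ, true_and]
  fin_cases i <;> simp [rayForm, cExt] <;> omega

lemma Nset_ne_univ {c : Fin 5 → ℤ} (hc : -1 ≤ c 4) (m : ℤ × ℤ) : Nset c m ≠ Finset.univ := by
  intro h
  have h4 : 4 ∈ Nset c m := h ▸ Finset.mem_univ _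
  have h6 : 6 ∈ Nset c m := h ▸ Finset.mem_univ _
  simp only [Nset, Finset.mem_filter, Finset.mem_univ, true_and] at h4 h6
  simp [rayForm, cExt] at h4 h6
  omega

lemma not_cohomologyFree_of_rightEnds {c : Fin 5 → ℤ} (m : ℤ × ℤ) {ε : ℤ} (hε : ε = 1 ∨ ε = -1)
    {i j : Fin 7} (hij : i ≠ j) (hi : IsRightEnd (Nset (ε • c) m) i)
    (hj : IsRightEnd (Nset (ε • c) m) j) : ¬CohomologyFree c := fun h =>
  hij <| (isCircularInterval_iff_rightEnd_unique _).1 (h m ε hε).1 i j hi hj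

lemma bounds_of_cohomologyFree {k c2 c3 : ℤ} (hk : 2 ≤ k) (h : CohomologyFree ![k, c2, c3, k, 1]) :
    2 * k - 1 ≤ c2 ∧ c2 ≤ 2 * k ∧ c2 + k - 1 ≤ c3 ∧ c3 ≤ c2 + k := by
  have c3_le : c3 ≤ 3 * k := by
    by_contra!
    exact not_cohomologyFree_of_rightEnds (k, 0) (.inr rfl) (i := 2) (j := 5) (by decide)
      (by simp [IsRightEnd, mem_Nset_cons]; omega) (by simp [IsRightEnd, mem_Nset_cons]; omega) h
  have le_c3 : 3 * k - 2 ≤ c3 := by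
    by_contra!
    exact not_cohomologyFree_of_rightEnds (1 - k, 1) (.inl rfl) (i := 2) (j := 6) (by decide)
      (by simp [IsRightEnd, mem_Nset_cons]; omega) (by simp [IsRightEnd, mem_Nset_cons]) h
  have c2_le : c2 ≤ 2 * k := by
    by_contra!
    exact not_cohomologyFree_of_rightEnds (-k, 1) (.inl rfl) (i := 0) (j := 2) (by decide)
      (by simp [IsRightEnd, mem_Nset_cons]; omega) (by simp [IsRightEnd, mem_Nset_cons]; omega) h
  have le_c2 : 2 * k - 1 ≤ c2 := by
    by_contra!
    exact not_cohomologyFree_of_rightEnds (k - 1, 0) (.inr rfl) (i := 0) (j := 5) (by decide)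
      (by simp [IsRightEnd, mem_Nset_cons]; omega) (by simp [IsRightEnd, mem_Nset_cons]; omega) h
  have not_low_high : ¬(c2 ≤ 2 * k - 1 ∧ 3 * k ≤ c3) := fun ⟨h2, h3⟩ =>
    not_cohomologyFree_of_rightEnds (k, 1) (.inr rfl) (i := 0) (j := 2) (by decide)
      (by simp [IsRightEnd, mem_Nset_cons]; omega) (by simp [IsRightEnd, mem_Nset_cons]; omega) h
  have not_high_low : ¬(2 * k ≤ c2 ∧ c3 ≤ 3 * k - 2) := fun ⟨h2, h3⟩ =>
    not_cohomologyFree_of_rightEnds (k - 1, -1) (.inr rfl) (i := 1) (j := 5) (by decide)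
      (by simp [IsRightEnd, mem_Nset_cons]; omega) (by simp [IsRightEnd, mem_Nset_cons]; omega) h
  omega

lemma isCircularInterval_Nset_of_bounds {k c2 c3 : ℤ} (hk : 2 ≤ k)
    (h : 2 * k - 1 ≤ c2 ∧ c2 ≤ 2 * k ∧ c2 + k - 1 ≤ c3 ∧ c3 ≤ c2 + k) (m : ℤ × ℤ)
    {ε : ℤ} (hε : ε = 1 ∨ ε = -1) : IsCircularInterval (Nset (ε • ![k, c2, c3, k, 1]) m) := by
  rw [isCircularInterval_iff_rightEnd_unique]
  obtain ⟨x, y⟩ := m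
  intro i j hi hj
  rcases hε with rfl | rfl <;> fin_cases i <;> fin_cases j <;>
    first | rfl | (simp [IsRightEnd, mem_Nset_cons] at hi hj; omega)

lemma cohomologyFree_iff_bounds {k c2 c3 : ℤ} (hk : 2 ≤ k) :
    CohomologyFree ![k, c2, c3, k, 1] ↔
      2 * k - 1 ≤ c2 ∧ c2 ≤ 2 * k ∧ c2 + k - 1 ≤ c3 ∧ c3 ≤ c2 + k :=
  ⟨bounds_of_cohomologyFree hk, fun h m ε hε =>
    ⟨isCircularInterval_Nset_of_bounds hk h m hε,
      Nset_ne_univ (by rcases hε with rfl | rfl <;> simp) m⟩⟩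

/-- For `k ≥ 2`, the vector `(k, c₂, c₃, k, 1)` is cohomology-free iff
`(c₂, c₃)` is one of `(2k-1, 3k-2)`, `(2k-1, 3k-1)`, `(2k, 3k-1)`, `(2k, 3k)`. -/
theorem classification_c4_eq_c1 (k : ℤ) (hk : 2 ≤ k) (c2 c3 : ℤ) :
    CohomologyFree ![k, c2, c3, k, 1] ↔
      (c2 = 2*k - 1 ∧ c3 = 3*k - 2) ∨ (c2 = 2*k - 1 ∧ c3 = 3*k - 1) ∨
      (c2 = 2*k ∧ c3 = 3*k - 1) ∨ (c2 = 2*k ∧ c3 = 3*k) := by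
  rw [cohomologyFree_iff_bounds hk]
  omega
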